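/- arXiv:1704.04420 — 6 statements merged into one kernel-verified Lean document; each statement's English description precedes it below -/
import Mathlib

section
/- Under the parameter setup, let p* ≥ 1 be a real number and u ∈ [1,∞]. If τ(p*) > 0 and κ_α(p*,u) ≤ 0, then z(α) + ω(α)/u > 0. -/
/-- Assertion (5.1) of the paper's Lemma 1.
Parameter setup: `β j > 0`, `σ j ∈ [0,1]` (the role of `1/r_j`), `m j ≥ 0`
(the role of `μ_j(α)`), `∑ σ j / β j > 0`; `βα = β(α)`, `ωα = ω(α)`,
`β0 = β(0)`, `ω0 = ω(0)` are defined as the reciprocals of the corresponding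
sums; `τinf = τ(∞) = 1 − 1/ω(0)`, `z = z(α)`.  The variable `invu ∈ [0,1]`
plays the role of `1/u` for `u ∈ [1,∞]` (with `1/u = 0` when `u = ∞`).
If `τ(p*) > 0` and `κ_α(p*,u) ≤ 0` then `z(α) + ω(α)/u > 0`. -/
theorem stmt1 (d : ℕ) (hd : 1 ≤ d) (β σ m : Fin d → ℝ)
    (hβ : ∀ j, 0 < β j) (hσ : ∀ j, 0 ≤ σ j ∧ σ j ≤ 1) (hm : ∀ j, 0 ≤ m j)
    (hsum : 0 < ∑ j, σ j / β j)
    (βα ωα β0 ω0 : ℝ)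
    (hβα : βα = (∑ j, (2 * m j + 1) / β j)⁻¹)
    (hωα : ωα = (∑ j, (2 * m j + 1) * σ j / β j)⁻¹)
    (hβ0 : β0 = (∑ j, 1 / β j)⁻¹)
    (hω0 : ω0 = (∑ j, σ j / β j)⁻¹)
    (τinf z : ℝ) (hτinf : τinf = 1 - 1 / ω0)
    (hz : z = ωα * (2 + 1 / βα) * β0 * τinf + 1)
    (p : ℝ) (hp : 1 ≤ p)
    (invu : ℝ) (hinvu : 0 ≤ invu ∧ invu ≤ 1)
    (hτp : 0 < τinf + 1 / (p * β0))
    (hκ : ωα * (2 + 1 / βα) / (1 + ωα * invu) - p ≤ 0) :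
    0 < z + ωα * invu := by
  obtain ⟨h0u, h1u⟩ := hinvu
  have hp0 : (0:ℝ) < p := lt_of_lt_of_le one_pos hp
  have hne : (Finset.univ : Finset (Fin d)).Nonempty := by
    rw [Finset.univ_nonempty_iff]
    exact Fin.pos_iff_nonempty.mp hd
  have hSβ : 0 < ∑ j, (2 * m j + 1) / β j :=
    Finset.sum_pos (fun j _ => div_pos (by linarith [hm j]) (hβ j)) hne
  have hS0 : 0 < ∑ j, 1 / β j :=
    Finset.sum_pos (fun j _ => div_pos one_pos (hβ j)) hne
  have hSα : 0 < ∑ j, (2 * m j + 1) * σ j / β j := by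
    refine lt_of_lt_of_le hsum (Finset.sum_le_sum fun j _ => ?_)
    have h1 : σ j / β j ≤ (2 * m j + 1) * (σ j / β j) :=
      le_mul_of_one_le_left (div_nonneg (hσ j).1 (hβ j).le) (by linarith [hm j])
    calc σ j / β j ≤ (2 * m j + 1) * (σ j / β j) := h1
      _ = (2 * m j + 1) * σ j / β j := by ring
  have hωα : 0 < ωα := by rw [hωα]; positivity
  have hβα : 0 < βα := by rw [hβα]; positivity
  have hβ0 : 0 < β0 := by rw [hβ0]; positivity
  set A := ωα * (2 + 1 / βα) with hA
  have hA0 : 0 < A := by positivity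
  have hden : 0 < 1 + ωα * invu := by positivity
  have hκ' : A ≤ p * (1 + ωα * invu) := by
    rw [sub_nonpos, div_le_iff₀ hden] at hκ
    linarith
  have hdivp : A / p ≤ 1 + ωα * invu := (div_le_iff₀ hp0).mpr (by linarith)
  have hτ : -(1 / (p * β0)) < τinf := by linarith
  have hkey : -(A / p) < A * β0 * τinf := by
    have := mul_lt_mul_of_pos_left hτ (mul_pos hA0 hβ0)
    calc -(A / p) = A * β0 * -(1 / (p * β0)) := by
          field_simp
        _ < A * β0 * τinf := this
  rw [hz]
  linarith
end

section
/- Under the parameter setup, let p* ≥ 1 be a real number and u ∈ [1,∞]. Define 1/𝐲 = min( max(−τ(∞)·β(0), 0), 1/p* ) (so 𝐲 = u* ∨ p*, where u* = (−τ(∞)β(0))^{−1} if τ(∞) < 0 and u* = ∞ otherwise). If τ(p*) > 0 and Y ≥ (X+1)/𝐲 − 1/u, then z(α)/ω(α) − 1 + 2/u ≥ 0. -/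
set_option maxHeartbeats 1000000 in
/-- Assertion (5.2) of the paper's Lemma 1.
Parameter setup as in the paper; `invu ∈ [0,1]` plays the role of `1/u` for
`u ∈ [1,∞]` (with `1/u = 0` when `u = ∞`), and
`invy = 1/𝐲 = min(max(−τ(∞)β(0), 0), 1/p*)` (so `𝐲 = u* ∨ p*`).
`X = ∑ m_j/β_j`, `Y = ∑ m_j σ_j/β_j`.
If `τ(p*) > 0` and `Y ≥ (X+1)/𝐲 − 1/u` then `z(α)/ω(α) − 1 + 2/u ≥ 0`. -/
theorem stmt3 (d : ℕ) (hd : 1 ≤ d) (β σ m : Fin d → ℝ)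
    (hβ : ∀ j, 0 < β j) (hσ : ∀ j, 0 ≤ σ j ∧ σ j ≤ 1) (hm : ∀ j, 0 ≤ m j)
    (hsum : 0 < ∑ j, σ j / β j)
    (βα ωα β0 ω0 : ℝ)
    (hβα : βα = (∑ j, (2 * m j + 1) / β j)⁻¹)
    (hωα : ωα = (∑ j, (2 * m j + 1) * σ j / β j)⁻¹)
    (hβ0 : β0 = (∑ j, 1 / β j)⁻¹)
    (hω0 : ω0 = (∑ j, σ j / β j)⁻¹)
    (τinf z X Y : ℝ) (hτinf : τinf = 1 - 1 / ω0)
    (hz : z = ωα * (2 + 1 / βα) * β0 * τinf + 1)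
    (hX : X = ∑ j, m j / β j) (hY : Y = ∑ j, m j * σ j / β j)
    (p : ℝ) (hp : 1 ≤ p)
    (invu : ℝ) (hinvu : 0 ≤ invu ∧ invu ≤ 1)
    (invy : ℝ) (hinvy : invy = min (max (-(τinf * β0)) 0) (1 / p))
    (hτp : 0 < τinf + 1 / (p * β0))
    (hY' : Y ≥ (X + 1) * invy - invu) :
    z / ωα - 1 + 2 * invu ≥ 0 := by
  have hd' : Nonempty (Fin d) := ⟨⟨0, hd⟩⟩
  set A := ∑ j, 1 / β j with hA_def
  set S := ∑ j, σ j / β j with hS_def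
  have hA : 0 < A := Finset.sum_pos (fun j _ => by have := hβ j; positivity)
    Finset.univ_nonempty
  have hS : 0 < S := hsum
  have hX0 : 0 ≤ X := hX ▸ Finset.sum_nonneg fun j _ => div_nonneg (hm j) (hβ j).le
  have hY0 : 0 ≤ Y := hY ▸ Finset.sum_nonneg fun j _ =>
    div_nonneg (mul_nonneg (hm j) (hσ j).1) (hβ j).le
  have hXA : (∑ j, (2 * m j + 1) / β j) = 2 * X + A := by
    rw [hX, hA_def, Finset.mul_sum, ← Finset.sum_add_distrib]
    exact Finset.sum_congr rfl fun j _ => by rw [add_div, mul_div_assoc]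
  have hYS : (∑ j, (2 * m j + 1) * σ j / β j) = 2 * Y + S := by
    rw [hY, hS_def, Finset.mul_sum, ← Finset.sum_add_distrib]
    exact Finset.sum_congr rfl fun j _ => by
      rw [add_mul, one_mul, mul_assoc, add_div, mul_div_assoc]
  have h2YS : (0:ℝ) < 2 * Y + S := by linarith
  have h2XA : (0:ℝ) < 2 * X + A := by linarith
  have hτ : τinf = 1 - S := by rw [hτinf, hω0, one_div, inv_inv]
  have hωα' : ωα = (2 * Y + S)⁻¹ := by rw [hωα, hYS]
  have hβα' : βα = (2 * X + A)⁻¹ := by rw [hβα, hXA]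
  have hp0 : (0:ℝ) < p := lt_of_lt_of_le one_pos hp
  have hAp : τinf + 1 / (p * β0) = 1 - S + A / p := by
    rw [hτ, hβ0]
    field_simp
  rw [hAp] at hτp
  have h1p : (S - 1) / A < 1 / p := by
    rw [div_lt_div_iff₀ hA hp0, one_mul]
    exact (lt_div_iff₀ hp0).mp (by linarith)
  have hneg : -(τinf * β0) = (S - 1) / A := by
    rw [hτ, hβ0, div_eq_mul_inv]
    ring
  have hy1 : (S - 1) / A ≤ invy := by
    rw [hinvy, hneg]
    exact le_min (le_max_left _ _) h1p.le
  have hy0 : 0 ≤ invy := by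
    rw [hinvy]
    exact le_min (le_max_right _ _) (by positivity)
  have hY'' : (X + 1) * ((S - 1) / A) ≤ Y + invu := by
    have h1 : (X + 1) * ((S - 1) / A) ≤ (X + 1) * invy :=
      mul_le_mul_of_nonneg_left hy1 (by linarith)
    linarith
  have key : (X + 1) * (S - 1) ≤ A * (Y + invu) := by
    have h := mul_le_mul_of_nonneg_left hY'' hA.le
    have e : A * ((X + 1) * ((S - 1) / A)) = (X + 1) * (S - 1) := by
      field_simp
    linarith [e ▸ h]
  have hz' : z / ωα = (2 + (2 * X + A)) * (1 - S) / A + (2 * Y + S) := by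
    rw [hωα', div_eq_mul_inv, inv_inv, hz, hωα', hβα', hτ, hβ0, one_div, inv_inv]
    field_simp
  rw [hz']
  have hE : (2 + (2 * X + A)) * (1 - S) / A + (2 * Y + S) - 1 + 2 * invu =
      (2 * (1 + X) * (1 - S) + 2 * A * (Y + invu)) / A := by
    field_simp
    ring
  rw [hE, ge_iff_le]
  apply div_nonneg _ hA.le
  nlinarith [key]
end

section
/- Under the parameter setup, let p* ≥ 1 be a real number with σ_j ≥ 1/p* for every j = 1,…,d, and define 1/𝐲 = min( max(−τ(∞)·β(0), 0), 1/p* ). If Y − (X+1)/𝐲 > 0 and ω(α)(2+1/β(α)) − p* ≥ 0, then there exists a real number s > p* such that τ(s) > 0 and s ≥ (1+X)/Y. -/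
/-- Assertion (5.3) of the paper's Lemma 1.
Parameter setup as in the paper; `p* ≥ 1` with `σ_j ≥ 1/p*` for all `j`
(i.e. `r_j ≤ p*`), and `invy = 1/𝐲 = min(max(−τ(∞)β(0), 0), 1/p*)`.
If `Y − (X+1)/𝐲 > 0` and `κ_α(p*,∞) = ω(α)(2+1/β(α)) − p* ≥ 0`, then there
exists `s > p*` with `τ(s) > 0` and `s ≥ (1+X)/Y`, where
`τ(s) = τ(∞) + 1/(s·β(0))`. -/
theorem stmt5 (d : ℕ) (hd : 1 ≤ d) (β σ m : Fin d → ℝ)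
    (hβ : ∀ j, 0 < β j) (hσ : ∀ j, 0 ≤ σ j ∧ σ j ≤ 1) (hm : ∀ j, 0 ≤ m j)
    (hsum : 0 < ∑ j, σ j / β j)
    (βα ωα β0 ω0 : ℝ)
    (hβα : βα = (∑ j, (2 * m j + 1) / β j)⁻¹)
    (hωα : ωα = (∑ j, (2 * m j + 1) * σ j / β j)⁻¹)
    (hβ0 : β0 = (∑ j, 1 / β j)⁻¹)
    (hω0 : ω0 = (∑ j, σ j / β j)⁻¹)
    (τinf X Y : ℝ) (hτinf : τinf = 1 - 1 / ω0)
    (hX : X = ∑ j, m j / β j) (hY : Y = ∑ j, m j * σ j / β j)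
    (p : ℝ) (hp : 1 ≤ p) (hσp : ∀ j, 1 / p ≤ σ j)
    (invy : ℝ) (hinvy : invy = min (max (-(τinf * β0)) 0) (1 / p))
    (hYX : 0 < Y - (X + 1) * invy)
    (hκ : 0 ≤ ωα * (2 + 1 / βα) - p) :
    ∃ s : ℝ, p < s ∧ 0 < τinf + 1 / (s * β0) ∧ s ≥ (1 + X) / Y := by
  have hp0 : (0:ℝ) < p := lt_of_lt_of_le one_pos hp
  set S1 : ℝ := ∑ j, 1 / β j with hS1
  set Sσ : ℝ := ∑ j, σ j / β j with hSσ
  have hne : Nonempty (Fin d) := Fin.pos_iff_nonempty.mp (by omega)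
  have hS1pos : 0 < S1 := by
    apply Finset.sum_pos (fun j _ => by have := hβ j; positivity) Finset.univ_nonempty
  have hβ0pos : 0 < β0 := by rw [hβ0]; positivity
  have hXnn : 0 ≤ X := by
    rw [hX]; exact Finset.sum_nonneg fun j _ => div_nonneg (hm j) (hβ j).le
  have hinvynn : 0 ≤ invy := by
    rw [hinvy]; exact le_min (le_max_right _ _) (by positivity)
  have hYpos : 0 < Y := by nlinarith
  have hA : (∑ j, (2 * m j + 1) * σ j / β j) = 2 * Y + Sσ := by
    rw [hY, hSσ, Finset.mul_sum, ← Finset.sum_add_distrib]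
    exact Finset.sum_congr rfl fun j _ => by ring
  have hB : (∑ j, (2 * m j + 1) / β j) = 2 * X + S1 := by
    rw [hX, hS1, Finset.mul_sum, ← Finset.sum_add_distrib]
    exact Finset.sum_congr rfl fun j _ => by ring
  have hApos : 0 < 2 * Y + Sσ := by nlinarith
  have hκ' : p * (2 * Y + Sσ) ≤ 2 + (2 * X + S1) := by
    rw [hωα, hβα, hA, hB, one_div, inv_inv, sub_nonneg] at hκ
    have h2 : (2 * Y + Sσ)⁻¹ * (2 + (2 * X + S1)) * (2 * Y + Sσ) = 2 + (2 * X + S1) := by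
      field_simp
    have h3 := mul_le_mul_of_nonneg_right hκ hApos.le
    rw [h2] at h3
    linarith
  have hτS : τinf = 1 - Sσ := by rw [hτinf, hω0, one_div, inv_inv]
  have hβ0S1 : β0 * S1 = 1 := by rw [hβ0]; exact inv_mul_cancel₀ hS1pos.ne'
  clear_value S1 Sσ
  clear hS1 hSσ hX hY hA hB hβα hωα hβ0 hω0 hτinf hsum hκ hσ hm hβ hσp hd hne
  by_cases hτ : 0 ≤ τinf
  · refine ⟨max p ((1 + X) / Y) + 1, ?_, ?_, ?_⟩
    · have := le_max_left p ((1 + X) / Y); linarith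
    · have hs : 0 < max p ((1 + X) / Y) + 1 := by
        have := le_max_left p ((1 + X) / Y); linarith
      have : 0 < 1 / ((max p ((1 + X) / Y) + 1) * β0) := by positivity
      linarith
    · have := le_max_right p ((1 + X) / Y); linarith
  · push_neg at hτ
    set t : ℝ := -(τinf * β0) with ht
    have htpos : 0 < t := by rw [ht]; nlinarith
    clear_value t
    have hmax : max t 0 = t := max_eq_left htpos.le
    by_cases hcase : 1 / p ≤ t
    · exfalso
      have hinvy' : invy = 1 / p := by rw [hinvy, hmax, min_eq_right hcase]
      rw [hinvy'] at hYX
      have h1 : (X + 1) * (1 / p) < Y := by linarith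
      have hpY : X + 1 < Y * p := by
        have h2 := mul_lt_mul_of_pos_right h1 hp0
        rwa [mul_assoc, one_div, inv_mul_cancel₀ hp0.ne', mul_one] at h2
      have h1' : p * Sσ < S1 := by nlinarith [hκ', hpY]
      have h3 : p * (Sσ - 1) < S1 := by nlinarith
      have hpt : p * t < 1 := by
        calc p * t = p * (Sσ - 1) * β0 := by rw [ht, hτS]; ring
        _ < S1 * β0 := mul_lt_mul_of_pos_right h3 hβ0pos
        _ = 1 := by rw [mul_comm]; exact hβ0S1
      have h4 : 1 ≤ t * p := (div_le_iff₀ hp0).mp hcase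
      nlinarith
    · push_neg at hcase
      have hinvy' : invy = t := by rw [hinvy, hmax, min_eq_left hcase.le]
      rw [hinvy'] at hYX
      have hYX' : (X + 1) * t < Y := by linarith
      set T : ℝ := t⁻¹ with hT
      have hTpos : 0 < T := inv_pos.mpr htpos
      have hTt : t * T = 1 := mul_inv_cancel₀ htpos.ne'
      clear_value T
      have hpt1 : t * p < 1 := (lt_div_iff₀ hp0).mp hcase
      have hpT : p < T := by nlinarith
      have hXYT : (1 + X) / Y < T := by
        rw [div_lt_iff₀ hYpos]; nlinarith
      have hM1 : p ≤ max p ((1 + X) / Y) := le_max_left _ _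
      have hM2 : (1 + X) / Y ≤ max p ((1 + X) / Y) := le_max_right _ _
      have hMT : max p ((1 + X) / Y) < T := max_lt hpT hXYT
      set s : ℝ := (max p ((1 + X) / Y) + T) / 2 with hs
      have hMs : max p ((1 + X) / Y) < s := by rw [hs]; linarith
      have hsT : s < T := by rw [hs]; linarith
      clear_value s
      have hspos : 0 < s := lt_of_lt_of_le hp0 (le_of_lt (lt_of_le_of_lt hM1 hMs))
      refine ⟨s, lt_of_le_of_lt hM1 hMs, ?_, le_of_lt (lt_of_le_of_lt hM2 hMs)⟩
      have hst : s * t < 1 := by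
        have h5 := mul_lt_mul_of_pos_right hsT htpos
        rw [mul_comm T t, hTt] at h5
        exact h5
      have hτeq : τinf = -t / β0 := by
        rw [ht]; field_simp
      have heq : τinf + 1 / (s * β0) = (1 - s * t) / (s * β0) := by
        rw [hτeq]; field_simp; ring
      rw [heq]
      exact div_pos (by linarith) (by positivity)
end

section
/- Under the parameter setup, let 𝐲 ≥ 1 be a real number with σ_j ≥ 1/𝐲 for every j = 1,…,d and τ(𝐲) ≤ 0, and let u ∈ [1,∞]. If min_{j} m_j + 1/u − 1/𝐲 ≥ 0, then Y ≥ (X+1)/𝐲 − 1/u. -/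
/-- Claim (2.9) proved in Remark 1 of the paper.
Parameter setup: `β j > 0`, `σ j ∈ [0,1]` (the role of `1/r_j`), `m j ≥ 0`
(the role of `μ_j`), `∑ σ j / β j > 0`; `β0 = β(0)`, `ω0 = ω(0)` are the
reciprocals of the corresponding sums; `X = ∑ m_j/β_j`,
`Y = ∑ m_j σ_j/β_j`; `invu ∈ [0,1]` plays the role of `1/u` for
`u ∈ [1,∞]` (with `1/u = 0` when `u = ∞`).  Let `y ≥ 1` satisfy
`σ_j ≥ 1/y` for every `j` and `τ(y) ≤ 0`.  If `min_j m_j + 1/u − 1/y ≥ 0`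
then `Y ≥ (X+1)/y − 1/u`. -/
theorem stmt6 (d : ℕ) (hd : 0 < d) (β σ m : Fin d → ℝ)
    (hβ : ∀ j, 0 < β j) (hσ : ∀ j, 0 ≤ σ j ∧ σ j ≤ 1) (hm : ∀ j, 0 ≤ m j)
    (hsum : 0 < ∑ j, σ j / β j)
    (β0 ω0 X Y : ℝ)
    (hβ0 : β0 = (∑ j, 1 / β j)⁻¹)
    (hω0 : ω0 = (∑ j, σ j / β j)⁻¹)
    (hX : X = ∑ j, m j / β j) (hY : Y = ∑ j, m j * σ j / β j)
    (y : ℝ) (hy : 1 ≤ y) (hσy : ∀ j, 1 / y ≤ σ j)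
    (hτy : 1 - 1 / ω0 + 1 / (y * β0) ≤ 0)
    (invu : ℝ) (hinvu : 0 ≤ invu ∧ invu ≤ 1)
    (hmin : 0 ≤ Finset.univ.inf' ⟨⟨0, hd⟩, Finset.mem_univ _⟩ m + invu - 1 / y) :
    Y ≥ (X + 1) / y - invu := by

  have hy0 : (0:ℝ) < y := lt_of_lt_of_le one_pos hy
  set μ := Finset.univ.inf' ⟨⟨0, hd⟩, Finset.mem_univ _⟩ m with hμdef
  have hμle : ∀ j, μ ≤ m j := fun j => Finset.inf'_le _ (Finset.mem_univ j)
  have hμ0 : 0 ≤ μ := Finset.le_inf' _ _ (fun j _ => hm j)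
  set T := ∑ j, 1 / β j with hTdef
  set S := ∑ j, σ j / β j with hSdef
  have hT : 0 < T := Finset.sum_pos (fun j _ => one_div_pos.2 (hβ j)) ⟨⟨0, hd⟩, Finset.mem_univ _⟩
  have hτ : 1 ≤ S - T / y := by
    have h1 : 1 / ω0 = S := by rw [hω0, one_div, inv_inv]
    have h2 : 1 / (y * β0) = T / y := by
      rw [hβ0]; field_simp
    linarith [hτy, h1 ▸ hτy]
  have key : Y - X / y = ∑ j, m j * (σ j - 1 / y) / β j := by
    rw [hY, hX, Finset.sum_div, ← Finset.sum_sub_distrib]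
    apply Finset.sum_congr rfl
    intro j _
    have hbj := (hβ j).ne'
    field_simp
  have key2 : μ * (S - T / y) ≤ ∑ j, m j * (σ j - 1 / y) / β j := by
    have : μ * (S - T / y) = ∑ j, μ * (σ j - 1 / y) / β j := by
      rw [hSdef, hTdef, Finset.sum_div, ← Finset.sum_sub_distrib, Finset.mul_sum]
      apply Finset.sum_congr rfl
      intro j _
      have hbj := (hβ j).ne'
      field_simp
    rw [this]
    apply Finset.sum_le_sum
    intro j _
    have h1 : 0 ≤ σ j - 1 / y := sub_nonneg.2 (hσy j)
    have := hμle j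
    have hbj := (hβ j).le
    gcongr
  have hμge : 1 / y - invu ≤ μ := by linarith
  have hmul : μ ≤ μ * (S - T / y) := le_mul_of_one_le_right hμ0 hτ
  have hfinal : Y - X / y ≥ 1 / y - invu := by
    rw [key]; linarith
  have : (X + 1) / y = X / y + 1 / y := by ring
  linarith [hfinal, this]
end

section
/- Let d ≥ 1, j ∈ {1,…,d}, ℓ ≥ 1 an integer, β > 0, L > 0 and s ∈ [1,∞]. Let f : ℝ^d → ℝ be measurable with ‖Δ^ℓ_{u,j} f‖_s ≤ L·|u|^β for every u ∈ ℝ, and let 𝒦 : ℝ → ℝ be measurable with I := ∫_ℝ |𝒦(z)|·|z|^β dz < ∞. Then for every integer 𝐤, the sum over all integers k ≤ 𝐤 of ‖x ↦ ∫_ℝ 𝒦(z) Δ^ℓ_{z e^k, j} f(x) dz‖_s is at most L·I·e^{𝐤β}/(1 − e^{−β}). -/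
open MeasureTheory
open scoped ENNReal

/-- First-order difference operator with step `u` in the direction of the
`j`-th variable: `Δ_{u,j} f (x) = f(x + u·e_j) − f(x)`. -/
noncomputable def diffOp {d : ℕ} (j : Fin d) (u : ℝ)
    (f : (Fin d → ℝ) → ℝ) : (Fin d → ℝ) → ℝ :=
  fun x => f (x + u • (Pi.single j 1 : Fin d → ℝ)) - f x

/-- `k`-th order difference operator `Δ^k_{u,j}`, defined by iteration. -/
noncomputable def diffIter {d : ℕ} (j : Fin d) (u : ℝ) (k : ℕ)
    (f : (Fin d → ℝ) → ℝ) : (Fin d → ℝ) → ℝ :=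
  (diffOp j u)^[k] f

/-! At each scale `e^k`, Minkowski's integral inequality and the Nikol'skii condition bound the
`L^s` norm of `x ↦ ∫ K z Δ^ℓ_{z e^k, j} f x dz` by `∫ |K z| L |z e^k|^β dz = L I e^{kβ}`, and the
sum over `k ≤ 𝐤` is a geometric series of ratio `e^{-β}`. Minkowski's inequality itself comes
from Hölder: `‖φ‖_p^p = ∫ φ^{p-1} ∫ F z dz ≤ (∫ ‖F z‖_p dz) ‖φ‖_p^{p-1}` for `φ = ∫ F z dz`. -/

open Function

lemma ENNReal.le_rpow_of_le_mul_rpow {p q : ℝ} (hpq : p.HolderConjugate q) {A B : ℝ≥0∞}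
    (hA : A ≠ ∞) (h : A ≤ B * A ^ (1 / q)) : A ≤ B ^ p := by
  rcases eq_or_ne A 0 with rfl | hA0
  · exact zero_le
  have hAq0 : A ^ (1 / q) ≠ 0 := (ENNReal.rpow_pos (pos_iff_ne_zero.2 hA0) hA).ne'
  have hAq : A ^ (1 / q) ≠ ∞ := ENNReal.rpow_ne_top_of_nonneg hpq.symm.one_div_nonneg hA
  have hsplit : A = A ^ p⁻¹ * A ^ (1 / q) := by
    rw [← ENNReal.rpow_add_of_nonneg _ _ (inv_nonneg.2 hpq.nonneg) hpq.symm.one_div_nonneg,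
      one_div, hpq.inv_add_inv_eq_one, ENNReal.rpow_one]
  refine (ENNReal.rpow_inv_le_iff hpq.pos).1 ((ENNReal.mul_le_mul_iff_left hAq0 hAq).1 ?_)
  exact hsplit ▸ h

section Minkowski

variable {α β : Type*} [MeasurableSpace α] [MeasurableSpace β] {μ : Measure α} {ν : Measure β}
  {F : β → α → ℝ≥0∞}

lemma lintegral_rpow_le_of_le_lintegral [SFinite μ] [SFinite ν] {p : ℝ}
    (hF : Measurable (uncurry F)) (hp : 1 < p) {ψ : α → ℝ≥0∞} (hψ : Measurable ψ)
    (hψF : ∀ x, ψ x ≤ ∫⁻ z, F z x ∂ν) (hψ_fin : ∫⁻ x, ψ x ^ p ∂μ ≠ ∞) :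
    ∫⁻ x, ψ x ^ p ∂μ ≤ (∫⁻ z, (∫⁻ x, F z x ^ p ∂μ) ^ (1 / p) ∂ν) ^ p := by
  have hpq : p.HolderConjugate p.conjExponent := .conjExponent hp
  refine ENNReal.le_rpow_of_le_mul_rpow hpq hψ_fin ?_
  calc ∫⁻ x, ψ x ^ p ∂μ = ∫⁻ x, ψ x ^ (p - 1) * ψ x ∂μ := by
        congr 1 with x
        conv_lhs => rw [← sub_add_cancel p 1]
        rw [ENNReal.rpow_add_of_nonneg _ _ (by linarith) zero_le_one, ENNReal.rpow_one]
    _ ≤ ∫⁻ x, ψ x ^ (p - 1) * ∫⁻ z, F z x ∂ν ∂μ := by gcongr with x; exact hψF x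
    _ = ∫⁻ x, ∫⁻ z, F z x * ψ x ^ (p - 1) ∂ν ∂μ := by
        congr 1 with x
        rw [mul_comm, ← lintegral_mul_const _ hF.of_uncurry_right]
    _ = ∫⁻ z, ∫⁻ x, F z x * ψ x ^ (p - 1) ∂μ ∂ν :=
        lintegral_lintegral_swap ((hF.comp measurable_swap).mul
          ((hψ.pow_const _).comp measurable_fst)).aemeasurable
    _ ≤ ∫⁻ z, (∫⁻ x, F z x ^ p ∂μ) ^ (1 / p) *
          (∫⁻ x, (ψ x ^ (p - 1)) ^ p.conjExponent ∂μ) ^ (1 / p.conjExponent) ∂ν :=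
        lintegral_mono fun z => ENNReal.lintegral_mul_le_Lp_mul_Lq μ hpq
          hF.of_uncurry_left.aemeasurable (hψ.pow_const _).aemeasurable
    _ = (∫⁻ z, (∫⁻ x, F z x ^ p ∂μ) ^ (1 / p) ∂ν) *
          (∫⁻ x, ψ x ^ p ∂μ) ^ (1 / p.conjExponent) := by
        simp_rw [← ENNReal.rpow_mul, hpq.sub_one_mul_conj]
        exact lintegral_mul_const' _ _
          (ENNReal.rpow_ne_top_of_nonneg hpq.symm.one_div_nonneg hψ_fin)

lemma iSup_min_natCast_mul {a b : ℝ≥0∞} (hb : b ≠ 0) : ⨆ n : ℕ, min a (n * b) = a := by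
  rw [← inf_iSup_eq, ← ENNReal.iSup_mul, ENNReal.iSup_natCast, ENNReal.top_mul hb]
  exact min_top_right a

theorem eLpNorm'_lintegral_le [SigmaFinite μ] [SFinite ν] {p : ℝ} (hF : Measurable (uncurry F))
    (hp : 1 ≤ p) :
    eLpNorm' (fun x => ∫⁻ z, F z x ∂ν) p μ ≤ ∫⁻ z, eLpNorm' (F z) p μ ∂ν := by
  simp only [eLpNorm', enorm_eq_self]
  have hF' : Measurable (uncurry fun x z => F z x) := hF.comp measurable_swap
  rcases hp.eq_or_lt with rfl | hp
  · simpa using (lintegral_lintegral_swap hF'.aemeasurable).le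
  set φ : α → ℝ≥0∞ := fun x => ∫⁻ z, F z x ∂ν
  set B := ∫⁻ z, (∫⁻ x, F z x ^ p ∂μ) ^ (1 / p) ∂ν
  have hφ : Measurable φ := hF'.lintegral_prod_right'
  obtain ⟨h, h_pos, h_meas, h_int⟩ :=
    exists_pos_lintegral_lt_of_sigmaFinite μ ENNReal.top_ne_zero
  -- Hölder's step needs a finite integral: exhaust `φ ^ p` by `min (φ ^ p) (n * h)`.
  set χ : ℕ → α → ℝ≥0∞ := fun n x => min (φ x ^ p) (n * h x)
  have hχ_meas (n : ℕ) : Measurable (χ n) :=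
    (hφ.pow_const p).min (measurable_const.mul h_meas.coe_nnreal_ennreal)
  have hχ_mono : Monotone χ := fun m n hmn x => by
    dsimp only [χ]
    gcongr
  have hχ_bound (n : ℕ) : ∫⁻ x, χ n x ∂μ ≤ B ^ p := by
    have hp0 : p ≠ 0 := by positivity
    have h_holder := lintegral_rpow_le_of_le_lintegral (μ := μ) hF hp ((hχ_meas n).pow_const p⁻¹)
      (fun x => (ENNReal.rpow_inv_le_iff (by positivity)).2 (min_le_left _ _)) ?_
    · rwa [funext fun x => ENNReal.rpow_inv_rpow hp0 (χ n x)] at h_holder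
    · simp only [ENNReal.rpow_inv_rpow hp0]
      refine ne_top_of_le_ne_top ?_ (lintegral_mono fun x => min_le_right _ _)
      rw [lintegral_const_mul _ h_meas.coe_nnreal_ennreal]
      exact ENNReal.mul_ne_top (ENNReal.natCast_ne_top n) h_int.ne
  have hφ_int : ∫⁻ x, φ x ^ p ∂μ = ⨆ n, ∫⁻ x, χ n x ∂μ := by
    rw [← lintegral_iSup hχ_meas hχ_mono]
    simp_rw [χ, iSup_min_natCast_mul (ENNReal.coe_ne_zero.2 (h_pos _).ne')]
  rw [hφ_int, one_div, ENNReal.rpow_inv_le_iff (by positivity)]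
  exact iSup_le hχ_bound

theorem eLpNorm_lintegral_le_of_le [SigmaFinite μ] [SFinite ν] {p : ℝ≥0∞}
    (hF : Measurable (uncurry F)) {M : β → ℝ≥0∞} (hM : Measurable M)
    (hFM : ∀ z, eLpNorm (F z) p μ ≤ M z) (hp : 1 ≤ p) :
    eLpNorm (fun x => ∫⁻ z, F z x ∂ν) p μ ≤ ∫⁻ z, M z ∂ν := by
  rcases eq_or_ne p ∞ with rfl | hp_top
  · have h_ae : ∀ᵐ x ∂μ, ∀ᵐ z ∂ν, F z x ≤ M z := by
      refine (Measure.ae_ae_comm (p := fun x z => F z x ≤ M z)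
        (measurableSet_le (hF.comp measurable_swap) (hM.comp measurable_snd))).2
        (ae_of_all _ fun z => ?_)
      filter_upwards [ae_le_eLpNormEssSup (f := F z)] with x hx
      exact hx.trans (by simpa using hFM z)
    rw [eLpNorm_exponent_top]
    exact essSup_le_of_ae_le _ (h_ae.mono fun x hx => lintegral_mono_ae hx)
  have hp0 : p ≠ 0 := (zero_lt_one.trans_le hp).ne'
  have hp_real : 1 ≤ p.toReal := ENNReal.toReal_one ▸ ENNReal.toReal_mono hp_top hp
  simp only [eLpNorm_eq_eLpNorm' hp0 hp_top] at hFM ⊢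
  exact (eLpNorm'_lintegral_le hF hp_real).trans (lintegral_mono hFM)

theorem eLpNorm_integral_le_of_le {E : Type*} [NormedAddCommGroup E] [NormedSpace ℝ E]
    [SigmaFinite μ] [SFinite ν] {p : ℝ≥0∞} {g : β → α → E} (hg : StronglyMeasurable (uncurry g))
    {M : β → ℝ≥0∞} (hM : Measurable M) (hgM : ∀ z, eLpNorm (g z) p μ ≤ M z) (hp : 1 ≤ p) :
    eLpNorm (fun x => ∫ z, g z x ∂ν) p μ ≤ ∫⁻ z, M z ∂ν :=
  (eLpNorm_mono_enorm fun _ => (enorm_integral_le_lintegral_enorm _).trans_eq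
    (enorm_eq_self _).symm).trans
    (eLpNorm_lintegral_le_of_le (F := fun z x => ‖g z x‖ₑ) hg.enorm hM
      (fun z => (eLpNorm_enorm (g z)).trans_le (hgM z)) hp)

end Minkowski

section DifferenceOperator

variable {d : ℕ} (j : Fin d) (ℓ : ℕ) {f : (Fin d → ℝ) → ℝ}

lemma diffIter_succ_apply (u : ℝ) (n : ℕ) (x : Fin d → ℝ) :
    diffIter j u (n + 1) f x =
      diffIter j u n f (x + u • (Pi.single j 1 : Fin d → ℝ)) - diffIter j u n f x := by
  rw [diffIter, Function.iterate_succ_apply']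
  rfl

lemma measurable_diffIter_uncurry (hf : Measurable f) :
    Measurable fun q : ℝ × (Fin d → ℝ) => diffIter j q.1 ℓ f q.2 := by
  induction ℓ with
  | zero => exact hf.comp measurable_snd
  | succ n ih =>
    simp only [diffIter_succ_apply]
    have h_shift : Measurable fun q : ℝ × (Fin d → ℝ) =>
        (q.1, q.2 + q.1 • (Pi.single j 1 : Fin d → ℝ)) := by fun_prop
    exact (ih.comp h_shift).sub ih

lemma eLpNorm_integral_mul_diffIter_le {β L : ℝ} {s : ℝ≥0∞} (hs : 1 ≤ s) (hf : Measurable f)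
    (hfs : ∀ u : ℝ, eLpNorm (diffIter j u ℓ f) s volume ≤ ENNReal.ofReal (L * |u| ^ β))
    {K : ℝ → ℝ} (hK : Measurable K) (hint : Integrable fun z => |K z| * |z| ^ β) (u : ℝ) :
    eLpNorm (fun x => ∫ z, K z * diffIter j (z * u) ℓ f x) s volume ≤
      ENNReal.ofReal (L * (∫ z, |K z| * |z| ^ β) * |u| ^ β) := by
  have hg : StronglyMeasurable
      (uncurry fun z (x : Fin d → ℝ) => K z * diffIter j (z * u) ℓ f x) :=
    ((hK.comp measurable_fst).mul ((measurable_diffIter_uncurry j ℓ hf).comp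
      ((measurable_fst.mul_const u).prodMk measurable_snd))).stronglyMeasurable
  have hM : Measurable fun z => ENNReal.ofReal |K z| * ENNReal.ofReal (L * |z * u| ^ β) := by
    fun_prop
  refine (eLpNorm_integral_le_of_le hg hM (fun z => ?_) hs).trans_eq ?_
  · rw [show (fun x => K z * diffIter j (z * u) ℓ f x) = K z • diffIter j (z * u) ℓ f from rfl,
      eLpNorm_const_smul, Real.enorm_eq_ofReal_abs]
    exact mul_le_mul_right (hfs _) _
  · have h_split (z : ℝ) : ENNReal.ofReal |K z| * ENNReal.ofReal (L * |z * u| ^ β) =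
        ENNReal.ofReal (L * |u| ^ β) * ENNReal.ofReal (|K z| * |z| ^ β) := by
      rw [abs_mul, Real.mul_rpow (abs_nonneg z) (abs_nonneg u), ← mul_assoc, mul_right_comm,
        ENNReal.ofReal_mul' (by positivity), ENNReal.ofReal_mul (abs_nonneg _)]
      ring
    have hI : 0 ≤ ∫ z, |K z| * |z| ^ β := integral_nonneg fun z => by positivity
    simp_rw [h_split]
    rw [lintegral_const_mul' _ _ ENNReal.ofReal_ne_top,
      ← ofReal_integral_eq_lintegral_ofReal hint (ae_of_all _ fun z => by positivity),
      ← ENNReal.ofReal_mul' hI, mul_right_comm]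

end DifferenceOperator

def natEquivIntLe (N : ℤ) : ℕ ≃ {k : ℤ // k ≤ N} where
  toFun n := ⟨N - n, by omega⟩
  invFun k := (N - k).toNat
  left_inv n := by simp
  right_inv k := by ext; simp [k.2]

lemma tsum_subtype_le_ofReal_mul_exp_mul (C : ℝ) {β : ℝ} (hβ : 0 < β) (N : ℤ) :
    ∑' k : {k : ℤ // k ≤ N}, ENNReal.ofReal (C * Real.exp ((k : ℤ) * β)) =
      ENNReal.ofReal (C * Real.exp (N * β) / (1 - Real.exp (-β))) := by
  have h_ratio : Real.exp (-β) < 1 := Real.exp_lt_one_iff.2 (neg_neg_iff_pos.2 hβ)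
  have h_term (n : ℕ) : ENNReal.ofReal (C * Real.exp (((N - n : ℤ) : ℝ) * β)) =
      ENNReal.ofReal (C * Real.exp (N * β)) * ENNReal.ofReal (Real.exp (-β)) ^ n := by
    rw [← ENNReal.ofReal_pow (Real.exp_nonneg _), ← ENNReal.ofReal_mul' (by positivity),
      ← Real.exp_nat_mul, mul_assoc, ← Real.exp_add]
    congr 3
    push_cast
    ring
  rw [← (natEquivIntLe N).tsum_eq]
  simp only [natEquivIntLe, Equiv.coe_fn_mk, h_term]
  rw [ENNReal.tsum_mul_left, ENNReal.tsum_geometric, ENNReal.ofReal_div_of_pos (by linarith),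
    div_eq_mul_inv, ENNReal.ofReal_sub _ (Real.exp_nonneg _), ENNReal.ofReal_one]

theorem stmt8_general (d : ℕ) (j : Fin d) (ℓ : ℕ)
    (βe L : ℝ) (hβe : 0 < βe)
    (s : ℝ≥0∞) (hs : 1 ≤ s)
    (f : (Fin d → ℝ) → ℝ) (hf : Measurable f)
    (hfs : ∀ u : ℝ,
      eLpNorm (diffIter j u ℓ f) s volume ≤ ENNReal.ofReal (L * |u| ^ βe))
    (K : ℝ → ℝ) (hK : Measurable K)
    (I : ℝ) (hI : I = ∫ z, |K z| * |z| ^ βe)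
    (hint : Integrable (fun z => |K z| * |z| ^ βe)) :
    ∀ bk : ℤ,
      (∑' k : {k : ℤ // k ≤ bk},
          eLpNorm (fun x => ∫ z, K z * diffIter j (z * Real.exp (k : ℤ)) ℓ f x)
            s volume)
        ≤ ENNReal.ofReal (L * I * Real.exp ((bk : ℝ) * βe) / (1 - Real.exp (-βe))) := by
  intro bk
  subst hI
  calc _ ≤ ∑' k : {k : ℤ // k ≤ bk},
        ENNReal.ofReal (L * (∫ z, |K z| * |z| ^ βe) * Real.exp ((k : ℤ) * βe)) :=
        ENNReal.tsum_le_tsum fun k => by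
          simpa only [abs_of_pos (Real.exp_pos _), ← Real.exp_mul] using
            eLpNorm_integral_mul_diffIter_le j ℓ hs hf hfs hK hint (Real.exp (k : ℤ))
    _ = _ := tsum_subtype_le_ofReal_mul_exp_mul _ hβe bk

/-- The summed bias bound over the geometric bandwidth grid `ℋ = {e^k, k ∈ ℤ}`
(the bound on `𝐁*` for the Nikol'skii class) from the proof of Proposition 3
of the paper: for every integer `𝐤`, the sum over all integers `k ≤ 𝐤` of
`‖x ↦ ∫ 𝒦(z) Δ^ℓ_{z e^k, j} f(x) dz‖_s` is at most
`L·I·e^{𝐤β}/(1 − e^{−β})`. -/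
theorem stmt8 (d : ℕ) (hd : 1 ≤ d) (j : Fin d) (ℓ : ℕ) (hℓ : 1 ≤ ℓ)
    (βe L : ℝ) (hβe : 0 < βe) (hL : 0 < L)
    (s : ℝ≥0∞) (hs : 1 ≤ s)
    (f : (Fin d → ℝ) → ℝ) (hf : Measurable f)
    (hfs : ∀ u : ℝ,
      eLpNorm (diffIter j u ℓ f) s volume ≤ ENNReal.ofReal (L * |u| ^ βe))
    (K : ℝ → ℝ) (hK : Measurable K)
    (I : ℝ) (hI : I = ∫ z, |K z| * |z| ^ βe)
    (hint : Integrable (fun z => |K z| * |z| ^ βe)) :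
    ∀ bk : ℤ,
      (∑' k : {k : ℤ // k ≤ bk},
          eLpNorm (fun x => ∫ z, K z * diffIter j (z * Real.exp (k : ℤ)) ℓ f x)
            s volume)
        ≤ ENNReal.ofReal (L * I * Real.exp ((bk : ℝ) * βe) / (1 - Real.exp (-βe))) :=
  stmt8_general d j ℓ βe L hβe s hs f hf hfs K hK I hI hint
end

section
/- Let 𝒦 : ℝ → ℝ be Lebesgue integrable, ℓ ≥ 1 an integer, and define 𝒦_ℓ(y) = Σ_{i=1}^ℓ binom(ℓ,i)·(−1)^{i+1}·(1/i)·𝒦(y/i). Let d ≥ 1, j ∈ {1,…,d}, let f : ℝ^d → ℝ be bounded and measurable, and let h ∈ ℝ and x ∈ ℝ^d. Then ∫_ℝ 𝒦_ℓ(u)·(f(x + u·h·e_j) − f(x)) du = (−1)^{ℓ−1} ∫_ℝ 𝒦(z)·Δ^ℓ_{zh,j} f(x) dz. -/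
open MeasureTheory

/-!
Since `Δ^ℓ` annihilates constants for `ℓ ≥ 1`, the binomial expansion of `Δ^ℓ_{zh,j} f(x)` may be
taken relative to the base point: `Δ^ℓ_{zh,j} f(x) = Σ_{i=1}^ℓ (-1)^(ℓ-i) C(ℓ,i) Δ_{izh,j} f(x)`.
On the other side, the substitution `u = iz` turns `∫ (1/i) 𝒦(u/i) Δ_{uh,j} f(x) du` into
`∫ 𝒦(z) Δ_{izh,j} f(x) dz`, so both sides are the same finite combination of these integrals.
Boundedness of `f` makes every term integrable, which lets the integral commute with the sums.
-/

open Finset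

lemma fwdDiff_iter_sub_const {M G : Type*} [AddCommMonoid M] [AddCommGroup G] (h : M)
    (f : M → G) (c : G) {n : ℕ} (hn : n ≠ 0) :
    (fwdDiff h)^[n] (fun y => f y - c) = (fwdDiff h)^[n] f := by
  obtain ⟨n, rfl⟩ := Nat.exists_eq_succ_of_ne_zero hn
  rw [Function.iterate_succ_apply, Function.iterate_succ_apply]
  congr 1
  funext y
  simp only [fwdDiff, sub_sub_sub_cancel_right]

lemma fwdDiff_iter_eq_sum_sub {M G : Type*} [AddCommMonoid M] [AddCommGroup G] (h : M)
    (f : M → G) {n : ℕ} (hn : n ≠ 0) (y : M) :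
    (fwdDiff h)^[n] f y
      = ∑ k ∈ Icc 1 n, ((-1 : ℤ) ^ (n - k) * n.choose k) • (f (y + k • h) - f y) := by
  rw [← fwdDiff_iter_sub_const h f (f y) hn, fwdDiff_iter_eq_sum_shift, range_eq_Ico,
    sum_eq_sum_Ico_succ_bot (Nat.succ_pos n)]
  simp [Ico_add_one_right_eq_Icc]

section diffOp

variable {d : ℕ} (j : Fin d)

lemma diffOp_eq_fwdDiff (u : ℝ) : diffOp j u = fwdDiff (u • (Pi.single j 1 : Fin d → ℝ)) := rfl

lemma diffIter_eq_sum_diffOp (u : ℝ) {k : ℕ} (hk : k ≠ 0) (f : (Fin d → ℝ) → ℝ)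
    (x : Fin d → ℝ) :
    diffIter j u k f x
      = ∑ i ∈ Icc 1 k, (-1 : ℝ) ^ (k - i) * k.choose i * diffOp j (i * u) f x := by
  rw [diffIter, diffOp_eq_fwdDiff, fwdDiff_iter_eq_sum_sub _ _ hk]
  refine sum_congr rfl fun i _ => ?_
  rw [zsmul_eq_mul, diffOp, ← Nat.cast_smul_eq_nsmul ℝ, smul_smul]
  push_cast
  ring

lemma measurable_diffOp_apply {f : (Fin d → ℝ) → ℝ} (hf : Measurable f) (x : Fin d → ℝ) :
    Measurable fun u => diffOp j u f x := by
  unfold diffOp; fun_prop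

lemma abs_diffOp_le {f : (Fin d → ℝ) → ℝ} {C : ℝ} (hfb : ∀ y, |f y| ≤ C) (u : ℝ)
    (x : Fin d → ℝ) : |diffOp j u f x| ≤ 2 * C :=
  (abs_sub _ _).trans (by linarith [hfb (x + u • (Pi.single j 1 : Fin d → ℝ)), hfb x])

end diffOp

lemma neg_one_pow_sub_one_mul_neg_one_pow_sub {i ℓ : ℕ} (hi : 1 ≤ i) (hiℓ : i ≤ ℓ) :
    (-1 : ℝ) ^ (ℓ - 1) * (-1) ^ (ℓ - i) = (-1) ^ (i + 1) := by
  rw [← pow_add, neg_one_pow_eq_pow_mod_two, neg_one_pow_eq_pow_mod_two (n := i + 1)]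
  congr 1
  omega

lemma integral_inv_mul_comp_div_mul {c : ℝ} (hc : 0 < c) (K φ : ℝ → ℝ) :
    ∫ u, c⁻¹ * K (u / c) * φ u = ∫ z, K z * φ (c * z) := by
  have := Measure.integral_comp_mul_left (fun u => K (u / c) * φ u) c
  simp only [mul_div_cancel_left₀ _ hc.ne'] at this
  rw [this, abs_of_pos (inv_pos.mpr hc), smul_eq_mul, ← integral_const_mul]
  simp only [mul_assoc]

lemma integral_finset_sum_const_mul {α ι : Type*} [MeasurableSpace α] {μ : Measure α}
    (s : Finset ι) (a : ι → ℝ) {F : ι → α → ℝ} (hF : ∀ i ∈ s, Integrable (F i) μ) :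
    ∫ z, ∑ i ∈ s, a i * F i z ∂μ = ∑ i ∈ s, a i * ∫ z, F i z ∂μ := by
  rw [integral_finsetSum _ fun i hi => (hF i hi).const_mul _]
  simp only [integral_const_mul]

theorem stmt9_general (d ℓ : ℕ) (hℓ : 1 ≤ ℓ) (j : Fin d)
    (K : ℝ → ℝ) (hK : Integrable K)
    (Kl : ℝ → ℝ)
    (hKl : ∀ y : ℝ, Kl y
      = ∑ i ∈ Finset.Icc 1 ℓ,
          (ℓ.choose i : ℝ) * (-1 : ℝ) ^ (i + 1) * (1 / (i : ℝ)) * K (y / (i : ℝ)))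
    (f : (Fin d → ℝ) → ℝ) (hf : Measurable f)
    (C : ℝ) (hfb : ∀ x, |f x| ≤ C)
    (h : ℝ) (x : Fin d → ℝ) :
    ∫ u, Kl u * (f (x + (u * h) • (Pi.single j 1 : Fin d → ℝ)) - f x)
      = (-1 : ℝ) ^ (ℓ - 1) * ∫ z, K z * diffIter j (z * h) ℓ f x := by
  set ψ : ℝ → ℝ := fun u => diffOp j (u * h) f x
  have hψ_meas : Measurable ψ := (measurable_diffOp_apply j hf x).comp (measurable_mul_const h)
  have hψ_bdd : ∀ u, ‖ψ u‖ ≤ 2 * C := fun u => abs_diffOp_le j hfb (u * h) x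
  have hi_pos : ∀ i ∈ Icc 1 ℓ, (0 : ℝ) < i := fun i hi => Nat.cast_pos.mpr (mem_Icc.mp hi).1
  have hKψ : ∀ i ∈ Icc 1 ℓ, Integrable fun z => K z * ψ ((i : ℝ) * z) := fun i _ =>
    hK.mul_bdd (hψ_meas.comp (measurable_const_mul _)).aestronglyMeasurable
      (.of_forall fun z => hψ_bdd _)
  have hKiψ : ∀ i ∈ Icc 1 ℓ, Integrable fun u => (i : ℝ)⁻¹ * K (u / i) * ψ u := fun i hi =>
    ((hK.comp_div (hi_pos i hi).ne').const_mul _).mul_bdd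
      hψ_meas.aestronglyMeasurable (.of_forall hψ_bdd)
  calc ∫ u, Kl u * ψ u
      = ∫ u, ∑ i ∈ Icc 1 ℓ,
          (ℓ.choose i * (-1 : ℝ) ^ (i + 1)) * ((i : ℝ)⁻¹ * K (u / i) * ψ u) := by
        congr with u
        rw [hKl, sum_mul]
        exact sum_congr rfl fun i _ => by ring
    _ = ∑ i ∈ Icc 1 ℓ, (ℓ.choose i * (-1 : ℝ) ^ (i + 1)) * ∫ z, K z * ψ (i * z) := by
        rw [integral_finset_sum_const_mul _ _ hKiψ]
        refine sum_congr rfl fun i hi => ?_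
        rw [integral_inv_mul_comp_div_mul (hi_pos i hi)]
    _ = (-1 : ℝ) ^ (ℓ - 1) *
          ∑ i ∈ Icc 1 ℓ, ((-1 : ℝ) ^ (ℓ - i) * ℓ.choose i) * ∫ z, K z * ψ (i * z) := by
        rw [mul_sum]
        refine sum_congr rfl fun i hi => ?_
        simp only [mem_Icc] at hi
        rw [← neg_one_pow_sub_one_mul_neg_one_pow_sub hi.1 hi.2]
        ring
    _ = (-1 : ℝ) ^ (ℓ - 1) * ∫ z, K z * diffIter j (z * h) ℓ f x := by
        rw [← integral_finset_sum_const_mul _ _ hKψ]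
        congr with z
        rw [diffIter_eq_sum_diffOp j _ (by omega), mul_sum]
        exact sum_congr rfl fun i _ => by simp only [ψ, mul_assoc]; ring

/-- The integral representation of the kernel bias established in the proof of
Proposition 3 of the paper: with `𝒦_ℓ` the kernel built from `𝒦` by formula
(2.6), for bounded measurable `f`,
`∫ 𝒦_ℓ(u)·(f(x+uh e_j) − f(x)) du = (−1)^{ℓ−1} ∫ 𝒦(z)·Δ^ℓ_{zh,j} f(x) dz`. -/
theorem stmt9 (d ℓ : ℕ) (hd : 1 ≤ d) (hℓ : 1 ≤ ℓ) (j : Fin d)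
    (K : ℝ → ℝ) (hK : Integrable K)
    (Kl : ℝ → ℝ)
    (hKl : ∀ y : ℝ, Kl y
      = ∑ i ∈ Finset.Icc 1 ℓ,
          (ℓ.choose i : ℝ) * (-1 : ℝ) ^ (i + 1) * (1 / (i : ℝ)) * K (y / (i : ℝ)))
    (f : (Fin d → ℝ) → ℝ) (hf : Measurable f)
    (C : ℝ) (hfb : ∀ x, |f x| ≤ C)
    (h : ℝ) (x : Fin d → ℝ) :
    ∫ u, Kl u * (f (x + (u * h) • (Pi.single j 1 : Fin d → ℝ)) - f x)
      = (-1 : ℝ) ^ (ℓ - 1) * ∫ z, K z * diffIter j (z * h) ℓ f x :=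
  stmt9_general d ℓ hℓ j K hK Kl hKl f hf C hfb h x
end
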